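/- Let (C, E, s) be an extriangulated category and A →x B →y C --δ--> an E-triangle. Then for any object X, the sequence Hom(X,A) → Hom(X,B) → Hom(X,C) → E(X,A) → E(X,B) → E(X,C) is exact, where the connecting map sends f: X → C to f*δ. -/

import Mathlib

open CategoryTheory Limits

universe w v u

/-- An extriangulated category structure on an additive category `𝒞`, in the sense of
Nakaoka–Palu: a biadditive `Ab`-valued functor `E` together with an additive realization,
encoded via the predicate `IsTriangle x y δ` meaning that `A ⟶x B ⟶y X` realizes
`δ ∈ E(X,A)`, satisfying (ET1)–(ET4) and their duals. -/
structure ExtriangulatedStructure (𝒞 : Type u) [Category.{v} 𝒞] [Preadditive 𝒞]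
    [HasBinaryBiproducts 𝒞] where
  E : 𝒞 → 𝒞 → AddCommGrpCat.{w}
  pull : ∀ {X' X A : 𝒞}, (X' ⟶ X) → E X A → E X' A
  push : ∀ {X A A' : 𝒞}, (A ⟶ A') → E X A → E X A'
  pull_id : ∀ {X A : 𝒞} (δ : E X A), pull (𝟙 X) δ = δ
  push_id : ∀ {X A : 𝒞} (δ : E X A), push (𝟙 A) δ = δ
  pull_comp : ∀ {X'' X' X A : 𝒞} (c' : X'' ⟶ X') (c : X' ⟶ X) (δ : E X A),
      pull (c' ≫ c) δ = pull c' (pull c δ)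
  push_comp : ∀ {X A A' A'' : 𝒞} (a : A ⟶ A') (a' : A' ⟶ A'') (δ : E X A),
      push (a ≫ a') δ = push a' (push a δ)
  pull_push : ∀ {X' X A A' : 𝒞} (c : X' ⟶ X) (a : A ⟶ A') (δ : E X A),
      pull c (push a δ) = push a (pull c δ)
  pull_add : ∀ {X' X A : 𝒞} (c : X' ⟶ X) (δ δ' : E X A),
      pull c (δ + δ') = pull c δ + pull c δ'
  push_add : ∀ {X A A' : 𝒞} (a : A ⟶ A') (δ δ' : E X A),
      push a (δ + δ') = push a δ + push a δ'
  add_pull : ∀ {X' X A : 𝒞} (c c' : X' ⟶ X) (δ : E X A),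
      pull (c + c') δ = pull c δ + pull c' δ
  add_push : ∀ {X A A' : 𝒞} (a a' : A ⟶ A') (δ : E X A),
      push (a + a') δ = push a δ + push a' δ
  IsTriangle : ∀ {A B X : 𝒞}, (A ⟶ B) → (B ⟶ X) → E X A → Prop
  realize_exists : ∀ {X A : 𝒞} (δ : E X A),
      ∃ (B : 𝒞) (x : A ⟶ B) (y : B ⟶ X), IsTriangle x y δ
  realize_zero : ∀ (A X : 𝒞),
      IsTriangle (biprod.inl : A ⟶ A ⊞ X) (biprod.snd : A ⊞ X ⟶ X) (0 : E X A)
  realize_sum : ∀ {A B X A' B' X' : 𝒞} (x : A ⟶ B) (y : B ⟶ X) (δ : E X A)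
      (x' : A' ⟶ B') (y' : B' ⟶ X') (δ' : E X' A'),
      IsTriangle x y δ → IsTriangle x' y' δ' →
      IsTriangle (biprod.map x x') (biprod.map y y')
        (push biprod.inl (pull biprod.fst δ) + push biprod.inr (pull biprod.snd δ'))
  realize_iso : ∀ {A B B' X : 𝒞} (x : A ⟶ B) (y : B ⟶ X) (δ : E X A) (b : B ≅ B'),
      IsTriangle x y δ → IsTriangle (x ≫ b.hom) (b.inv ≫ y) δ
  realize_mor : ∀ {A B X A' B' X' : 𝒞} {x : A ⟶ B} {y : B ⟶ X} {δ : E X A}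
      {x' : A' ⟶ B'} {y' : B' ⟶ X'} {δ' : E X' A'} (a : A ⟶ A') (c : X ⟶ X'),
      IsTriangle x y δ → IsTriangle x' y' δ' → push a δ = pull c δ' →
      ∃ b : B ⟶ B', x ≫ b = a ≫ x' ∧ y ≫ c = b ≫ y'
  ET3 : ∀ {A B X A' B' X' : 𝒞} {x : A ⟶ B} {y : B ⟶ X} {δ : E X A}
      {x' : A' ⟶ B'} {y' : B' ⟶ X'} {δ' : E X' A'} (a : A ⟶ A') (b : B ⟶ B'),
      IsTriangle x y δ → IsTriangle x' y' δ' → x ≫ b = a ≫ x' →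
      ∃ c : X ⟶ X', push a δ = pull c δ' ∧ y ≫ c = b ≫ y'
  ET3op : ∀ {A B X A' B' X' : 𝒞} {x : A ⟶ B} {y : B ⟶ X} {δ : E X A}
      {x' : A' ⟶ B'} {y' : B' ⟶ X'} {δ' : E X' A'} (b : B ⟶ B') (c : X ⟶ X'),
      IsTriangle x y δ → IsTriangle x' y' δ' → y ≫ c = b ≫ y' →
      ∃ a : A ⟶ A', push a δ = pull c δ' ∧ x ≫ b = a ≫ x'
  ET4 : ∀ {A B D Cv F : 𝒞} (f : A ⟶ B) (f' : B ⟶ D) (δ : E D A)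
      (g : B ⟶ Cv) (g' : Cv ⟶ F) (δ' : E F B),
      IsTriangle f f' δ → IsTriangle g g' δ' →
      ∃ (E₀ : 𝒞) (h : A ⟶ Cv) (h' : Cv ⟶ E₀) (d : D ⟶ E₀) (e : E₀ ⟶ F) (δ'' : E E₀ A),
        IsTriangle h h' δ'' ∧ IsTriangle d e (push f' δ') ∧
        h = f ≫ g ∧ f' ≫ d = g ≫ h' ∧ g' = h' ≫ e ∧
        pull d δ'' = δ ∧ push f δ'' = pull e δ'
  ET4op : ∀ {D B A F Cv : 𝒞} (i : D ⟶ B) (p : B ⟶ A) (δ : E A D)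
      (j : F ⟶ Cv) (q : Cv ⟶ B) (δ' : E B F),
      IsTriangle i p δ → IsTriangle j q δ' →
      ∃ (E₀ : 𝒞) (i' : E₀ ⟶ Cv) (p' : Cv ⟶ A) (m : F ⟶ E₀) (n : E₀ ⟶ D) (δ'' : E A E₀),
        IsTriangle i' p' δ'' ∧ IsTriangle m n (pull i δ') ∧
        p' = q ≫ p ∧ i' ≫ q = n ≫ i ∧ j = m ≫ i' ∧
        push n δ'' = δ ∧ pull p δ'' = push m δ'

namespace ExtriangulatedStructure

variable {𝒞 : Type u} [Category.{v} 𝒞] [Preadditive 𝒞] [HasBinaryBiproducts 𝒞]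
variable (S : ExtriangulatedStructure.{w} 𝒞)

/-- A morphism is an inflation if it occurs as the first map of some `E`-triangle. -/
def IsInflation {A B : 𝒞} (f : A ⟶ B) : Prop :=
  ∃ (X : 𝒞) (g : B ⟶ X) (δ : S.E X A), S.IsTriangle f g δ

/-- A morphism is a deflation if it occurs as the second map of some `E`-triangle. -/
def IsDeflation {B X : 𝒞} (g : B ⟶ X) : Prop :=
  ∃ (A : 𝒞) (f : A ⟶ B) (δ : S.E X A), S.IsTriangle f g δ

/-- Condition (WIC). -/
def WIC : Prop :=
  (∀ {A B X : 𝒞} (f : A ⟶ B) (g : B ⟶ X), S.IsInflation (f ≫ g) → S.IsInflation f) ∧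
  (∀ {A B X : 𝒞} (f : A ⟶ B) (g : B ⟶ X), S.IsDeflation (f ≫ g) → S.IsDeflation g)

/-- `(a, b, c)` is a morphism of `E`-triangles. -/
def IsTriangleMor {A B X A' B' X' : 𝒞} (x : A ⟶ B) (y : B ⟶ X) (δ : S.E X A)
    (x' : A' ⟶ B') (y' : B' ⟶ X') (δ' : S.E X' A')
    (a : A ⟶ A') (b : B ⟶ B') (c : X ⟶ X') : Prop :=
  x ≫ b = a ≫ x' ∧ y ≫ c = b ≫ y' ∧ S.push a δ = S.pull c δ'

/-- A cotorsion pair `(𝒬, ℛ)`: `E(𝒬, ℛ) = 0` and every object admits the two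
approximation `E`-triangles. -/
def CotorsionPair (𝒬 ℛ : Set 𝒞) : Prop :=
  (∀ (Q R : 𝒞), Q ∈ 𝒬 → R ∈ ℛ → ∀ δ : S.E Q R, δ = 0) ∧
  (∀ X : 𝒞, ∃ (R Q : 𝒞) (f : R ⟶ Q) (g : Q ⟶ X) (δ : S.E X R),
      S.IsTriangle f g δ ∧ Q ∈ 𝒬 ∧ R ∈ ℛ) ∧
  (∀ X : 𝒞, ∃ (R Q : 𝒞) (f : X ⟶ R) (g : R ⟶ Q) (δ : S.E Q X),
      S.IsTriangle f g δ ∧ Q ∈ 𝒬 ∧ R ∈ ℛ)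

/-- A cotorsion pair is hereditary if `𝒬` is closed under cocones of deflations and
`ℛ` is closed under cones of inflations. -/
def Hereditary (𝒬 ℛ : Set 𝒞) : Prop :=
  (∀ {A B X : 𝒞} (f : A ⟶ B) (g : B ⟶ X) (δ : S.E X A),
      S.IsTriangle f g δ → B ∈ 𝒬 → X ∈ 𝒬 → A ∈ 𝒬) ∧
  (∀ {A B X : 𝒞} (f : A ⟶ B) (g : B ⟶ X) (δ : S.E X A),
      S.IsTriangle f g δ → A ∈ ℛ → B ∈ ℛ → X ∈ ℛ)

/-- A class of objects is thick: closed under direct summands and satisfying the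
2-out-of-3 property on `E`-triangles. -/
def Thick (𝒲 : Set 𝒞) : Prop :=
  (∀ {X Y : 𝒞}, Y ∈ 𝒲 → (∃ (i : X ⟶ Y) (p : Y ⟶ X), i ≫ p = 𝟙 X) → X ∈ 𝒲) ∧
  (∀ {A B X : 𝒞} (f : A ⟶ B) (g : B ⟶ X) (δ : S.E X A), S.IsTriangle f g δ →
    (A ∈ 𝒲 → B ∈ 𝒲 → X ∈ 𝒲) ∧ (A ∈ 𝒲 → X ∈ 𝒲 → B ∈ 𝒲) ∧ (B ∈ 𝒲 → X ∈ 𝒲 → A ∈ 𝒲))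

/-- `(𝒬, 𝒲, ℛ)` is a Hovey triple. -/
def HoveyTriple (𝒬 𝒲 ℛ : Set 𝒞) : Prop :=
  S.Thick 𝒲 ∧ S.CotorsionPair 𝒬 (𝒲 ∩ ℛ) ∧ S.CotorsionPair (𝒬 ∩ 𝒲) ℛ

end ExtriangulatedStructure

namespace ExtriangulatedStructure

variable {𝒞 : Type u} [Category.{v} 𝒞] [Preadditive 𝒞] [HasBinaryBiproducts 𝒞]
variable (S : ExtriangulatedStructure.{w} 𝒞)

lemma pull_zero {X' X A : 𝒞} (c : X' ⟶ X) : S.pull c (0 : S.E X A) = 0 :=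
  (AddMonoidHom.mk' (S.pull c) (S.pull_add c)).map_zero

lemma zero_push {X A A' : 𝒞} (δ : S.E X A) : S.push (0 : A ⟶ A') δ = 0 :=
  (AddMonoidHom.mk' (fun a : A ⟶ A' => S.push a δ) (fun a a' => S.add_push a a' δ)).map_zero

namespace IsTriangle

variable {S} {A B C T : 𝒞} {x : A ⟶ B} {y : B ⟶ C} {δ : S.E C A}

lemma comp_eq_zero_and_push_eq_zero (hT : S.IsTriangle x y δ) :
    x ≫ y = 0 ∧ S.push x δ = 0 := by
  obtain ⟨a, hδ, hx⟩ := S.ET3op (biprod.lift (𝟙 B) y) (𝟙 C) hT (S.realize_zero B C)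
    (by simp)
  have ha : a = x := by simpa using (congrArg (· ≫ biprod.fst) hx).symm
  refine ⟨by simpa using congrArg (· ≫ biprod.snd) hx, ?_⟩
  rw [← ha, hδ, S.pull_id]

lemma pull_eq_zero (hT : S.IsTriangle x y δ) : S.pull y δ = 0 := by
  obtain ⟨c, hδ, hy⟩ := S.ET3 (𝟙 A) (biprod.desc x (𝟙 B)) (S.realize_zero A B) hT (by simp)
  have hc : c = y := by simpa using congrArg (biprod.inr ≫ ·) hy
  rw [← hc, ← hδ, S.push_id]

lemma exists_section_of_zero {D : 𝒞} {d : A ⟶ D} {e : D ⟶ C} (hT : S.IsTriangle d e 0) :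
    ∃ s : C ⟶ D, s ≫ e = 𝟙 C := by
  obtain ⟨b, -, hb⟩ := S.realize_mor (𝟙 A) (𝟙 C) (S.realize_zero A C) hT
    (by rw [S.push_id, S.pull_id])
  exact ⟨biprod.inr ≫ b, by simpa using (congrArg (biprod.inr ≫ ·) hb).symm⟩

lemma comp_eq_zero_iff_exists_comp (hT : S.IsTriangle x y δ) (φ : T ⟶ B) :
    φ ≫ y = 0 ↔ ∃ ψ : T ⟶ A, ψ ≫ x = φ := by
  constructor
  · intro hφ
    obtain ⟨a, -, ha⟩ := S.ET3op (biprod.desc φ 0) (0 : C ⟶ C) (S.realize_zero T C) hT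
      (by apply biprod.hom_ext' <;> simp [hφ])
    exact ⟨a, by simpa using ha.symm⟩
  · rintro ⟨ψ, rfl⟩
    rw [Category.assoc, hT.comp_eq_zero_and_push_eq_zero.1, comp_zero]

lemma pull_eq_zero_iff_exists_comp (hT : S.IsTriangle x y δ) (φ : T ⟶ C) :
    S.pull φ δ = 0 ↔ ∃ ψ : T ⟶ B, ψ ≫ y = φ := by
  constructor
  · intro hφ
    obtain ⟨b, -, hb⟩ := S.realize_mor (𝟙 A) φ (S.realize_zero A T) hT
      (by rw [S.push_id, hφ])
    exact ⟨biprod.inr ≫ b, by simpa using (congrArg (biprod.inr ≫ ·) hb).symm⟩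
  · rintro ⟨ψ, rfl⟩
    rw [S.pull_comp, hT.pull_eq_zero, S.pull_zero]

lemma push_eq_zero_iff_exists_pull (hT : S.IsTriangle x y δ) (ε : S.E T A) :
    S.push x ε = 0 ↔ ∃ φ : T ⟶ C, S.pull φ δ = ε := by
  constructor
  · intro hε
    obtain ⟨D, f, g, hε'⟩ := S.realize_exists ε
    -- `x_* ε = 0` makes `x` factor through `f` (via `b ≫ fst`); `(ET3)` then gives `φ`.
    obtain ⟨b, hb, -⟩ := S.realize_mor x (𝟙 T) hε' (S.realize_zero B T)
      (by rw [S.pull_id, hε])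
    obtain ⟨c, hc, -⟩ := S.ET3 (𝟙 A) (b ≫ biprod.fst) hε' hT
      (by rw [← Category.assoc, hb]; simp)
    exact ⟨c, by rw [← hc, S.push_id]⟩
  · rintro ⟨φ, rfl⟩
    rw [← S.pull_push, hT.comp_eq_zero_and_push_eq_zero.2, S.pull_zero]

lemma push_eq_zero_iff_exists_push (hT : S.IsTriangle x y δ) (ε : S.E T B) :
    S.push y ε = 0 ↔ ∃ ε' : S.E T A, S.push x ε' = ε := by
  constructor
  · intro hε
    obtain ⟨D, f, g, hε'⟩ := S.realize_exists ε
    -- The octahedron `(ET4)` yields a triangle `C → E₀ →e T` realizing `y_* ε = 0`,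
    -- and `e^* ε` lies in the image of `x_*`; a section of `e` pulls this back to `ε`.
    obtain ⟨E₀, _, _, _, e, δ'', -, hsplit, -, -, -, -, hδ''⟩ := S.ET4 x y δ f g ε hT hε'
    rw [hε] at hsplit
    obtain ⟨s, hs⟩ := hsplit.exists_section_of_zero
    refine ⟨S.pull s δ'', ?_⟩
    rw [← S.pull_push, hδ'', ← S.pull_comp, hs, S.pull_id]
  · rintro ⟨ε', rfl⟩
    rw [← S.push_comp, hT.comp_eq_zero_and_push_eq_zero.1, S.zero_push]

end IsTriangle

end ExtriangulatedStructure

open CategoryTheory Limits in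
/-- the covariant long exact sequence associated to an E-triangle. -/
theorem stmt13 {𝒞 : Type u} [Category.{v} 𝒞] [Preadditive 𝒞] [HasBinaryBiproducts 𝒞]
    (S : ExtriangulatedStructure.{w} 𝒞)
    {A B C0 : 𝒞} (x : A ⟶ B) (y : B ⟶ C0) (δ : S.E C0 A)
    (hT : S.IsTriangle x y δ) (T : 𝒞) :
    (∀ φ : T ⟶ B, φ ≫ y = 0 ↔ ∃ ψ : T ⟶ A, ψ ≫ x = φ) ∧
    (∀ φ : T ⟶ C0, S.pull φ δ = 0 ↔ ∃ ψ : T ⟶ B, ψ ≫ y = φ) ∧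
    (∀ ε : S.E T A, S.push x ε = 0 ↔ ∃ φ : T ⟶ C0, S.pull φ δ = ε) ∧
    (∀ ε : S.E T B, S.push y ε = 0 ↔ ∃ ε' : S.E T A, S.push x ε' = ε) :=
  ⟨hT.comp_eq_zero_iff_exists_comp, hT.pull_eq_zero_iff_exists_comp,
    hT.push_eq_zero_iff_exists_pull, hT.push_eq_zero_iff_exists_push⟩
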